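/- Let n ≥ 2, let h : ℝ^n → ℝ be twice continuously differentiable on an open set containing Δ_n° with Hessian positive definite on Δ_n°, and let M := {P_H ∇h(x) : x ∈ Δ_n°}. Let A ∈ ℝ^{n×m} and suppose there is no u₀ ∈ Δ_m° with A u₀ ∈ span{𝟙}. Then for every z₀ ∈ M there exists z₁ ∈ M such that for no T ≥ 0 and no integrable control u : [0,T] → Δ_m does z₀ + ∫₀ᵀ P_H A u(s) ds = z₁. -/

import Mathlib

open Matrix MeasureTheory

noncomputable section

/-- The standard probability simplex in `ℝ^n`. -/
def simplex (n : ℕ) : Set (Fin n → ℝ) := {x | (∀ i, 0 ≤ x i) ∧ ∑ i, x i = 1}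

/-- The relative interior of the standard probability simplex. -/
def simplexInt (n : ℕ) : Set (Fin n → ℝ) := {x | (∀ i, 0 < x i) ∧ ∑ i, x i = 1}

/-- The all-ones vector `𝟙`. -/
def ones (n : ℕ) : Fin n → ℝ := fun _ => 1

/-- The orthogonal projection matrix `P_H = I - (1/n) 𝟙 𝟙ᵀ` onto `H = {z : ∑ i, z i = 0}`. -/
def PH (n : ℕ) : Matrix (Fin n) (Fin n) ℝ :=
  1 - (n : ℝ)⁻¹ • Matrix.of fun _ _ => (1 : ℝ)

/-- The gradient (vector of partial derivatives) of `h`. -/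
def grad {n : ℕ} (h : (Fin n → ℝ) → ℝ) (x : Fin n → ℝ) : Fin n → ℝ :=
  fun i => fderiv ℝ h x (Pi.single i 1)

/-- The Hessian matrix of `h`. -/
def hess {n : ℕ} (h : (Fin n → ℝ) → ℝ) (x : Fin n → ℝ) : Matrix (Fin n) (Fin n) ℝ :=
  Matrix.of fun i j =>
    fderiv ℝ (fun y => fderiv ℝ h y (Pi.single j 1)) x (Pi.single i 1)

/-!
Without a fully mixed neutralizing strategy, `0` is not an interior point of the convex set
`A Δ_m + span {𝟙}`, so a supporting hyperplane gives `c ≠ 0` with `∑ c = 0` and `c ⬝ᵥ A u ≤ 0`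
on `Δ_m`. Since `c ∈ H`, the quantity `c ⬝ᵥ z` is nonincreasing along `ż = P_H A u`, whereas
`c ⬝ᵥ ∇h` strictly increases when one moves from `x₀` in the direction `c`, the Hessian being
positive definite. A point `z₁ = P_H ∇h(x₁)` obtained this way is unreachable from `z₀`.
-/

open Set Filter Topology
open scoped Pointwise

theorem LinearMap.apply_eq_dotProduct_single {R ι : Type*} [CommSemiring R] [Fintype ι]
    [DecidableEq ι] (g : (ι → R) →ₗ[R] R) (y : ι → R) :
    g y = (fun i => g (Pi.single i 1)) ⬝ᵥ y :=
  (LinearMap.congr_fun ((dotProductEquiv R ι).apply_symm_apply g) y).symm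

theorem Convex.exists_ne_zero_forall_le_of_notMem_interior {E : Type*} [NormedAddCommGroup E]
    [NormedSpace ℝ E] [FiniteDimensional ℝ E] {C : Set E} (hC : Convex ℝ C) (hCne : C.Nonempty)
    {x : E} (hx : x ∉ interior C) : ∃ f : StrongDual ℝ E, f ≠ 0 ∧ ∀ a ∈ C, f a ≤ f x := by
  rcases (interior C).eq_empty_or_nonempty with hint | hint
  · -- `C` lies in a proper affine subspace; a nonzero functional constant on it works up to sign.
    obtain ⟨a₀, ha₀⟩ := hCne
    have hspan : vectorSpan ℝ C < ⊤ := by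
      rw [lt_top_iff_ne_top, Ne,
        ← AffineSubspace.affineSpan_eq_top_iff_vectorSpan_eq_top_of_nonempty ℝ E E ⟨a₀, ha₀⟩,
        ← hC.interior_nonempty_iff_affineSpan_eq_top, hint]
      exact Set.not_nonempty_empty
    obtain ⟨g, hg0, hg⟩ := (vectorSpan ℝ C).exists_le_ker_of_lt_top hspan
    have hconst : ∀ a ∈ C, g a = g a₀ := fun a ha => by
      simpa [sub_eq_zero] using hg (vsub_mem_vectorSpan ℝ ha ha₀)
    have hf0 : LinearMap.toContinuousLinearMap g ≠ 0 := by simpa using hg0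
    by_cases hle : g a₀ ≤ g x
    · exact ⟨LinearMap.toContinuousLinearMap g, hf0, fun a ha => (hconst a ha).trans_le hle⟩
    · refine ⟨-LinearMap.toContinuousLinearMap g, neg_ne_zero.mpr hf0, fun a ha => ?_⟩
      simp only [_root_.neg_apply, LinearMap.coe_toContinuousLinearMap', hconst a ha]
      linarith
  · exact geometric_hahn_banach_of_nonempty_interior_point hC hx hint

theorem HasDerivAt.eventually_nhdsGT_lt {f : ℝ → ℝ} {f' x : ℝ} (hf : HasDerivAt f f' x)
    (hf' : 0 < f') : ∀ᶠ t in 𝓝[>] x, f x < f t := by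
  have hslope := (hasDerivWithinAt_iff_tendsto_slope' (lt_irrefl x)).mp hf.hasDerivWithinAt
  filter_upwards [hslope.eventually_const_lt hf', self_mem_nhdsWithin] with t ht hxt
  rw [slope_def_field, div_pos_iff_of_pos_right (sub_pos.mpr hxt)] at ht
  linarith

theorem ContinuousLinearMap.intervalIntegral_nonpos {E : Type*} [NormedAddCommGroup E]
    [NormedSpace ℝ E] [CompleteSpace E] (φ : StrongDual ℝ E) {v : ℝ → E} {T : ℝ} (hT : 0 ≤ T)
    (hv : ∀ s ∈ Icc 0 T, φ (v s) ≤ 0) : φ (∫ s in 0..T, v s) ≤ 0 := by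
  by_cases hint : IntervalIntegrable v volume 0 T
  · rw [← φ.intervalIntegral_comp_comm hint]
    have := intervalIntegral.integral_nonneg (μ := volume) hT fun s hs => neg_nonneg.mpr (hv s hs)
    rwa [intervalIntegral.integral_neg, neg_nonneg] at this
  · rw [intervalIntegral.integral_undef hint, map_zero]

theorem dotProduct_PH_mulVec {n : ℕ} {c : Fin n → ℝ} (hc : ∑ i, c i = 0) (v : Fin n → ℝ) :
    c ⬝ᵥ (PH n *ᵥ v) = c ⬝ᵥ v := by
  rw [PH, sub_mulVec, one_mulVec, dotProduct_sub, sub_eq_self]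
  simp [dotProduct, mulVec, ← Finset.mul_sum, ← Finset.sum_mul, hc]

theorem dotProduct_grad {n : ℕ} (h : (Fin n → ℝ) → ℝ) (x c : Fin n → ℝ) :
    c ⬝ᵥ grad h x = fderiv ℝ h x c := by
  rw [dotProduct_comm]
  exact ((fderiv ℝ h x).toLinearMap.apply_eq_dotProduct_single c).symm

theorem hess_apply {n : ℕ} {h : (Fin n → ℝ) → ℝ} {x : Fin n → ℝ}
    (hd : DifferentiableAt ℝ (fderiv ℝ h) x) (i j : Fin n) :
    hess h x i j = fderiv ℝ (fderiv ℝ h) x (Pi.single i 1) (Pi.single j 1) := by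
  simp [hess, fderiv_clm_apply hd (differentiableAt_const _)]

theorem dotProduct_hess_mulVec {n : ℕ} {h : (Fin n → ℝ) → ℝ} {x : Fin n → ℝ}
    (hd : DifferentiableAt ℝ (fderiv ℝ h) x) (c : Fin n → ℝ) :
    c ⬝ᵥ (hess h x *ᵥ c) = fderiv ℝ (fderiv ℝ h) x c c := by
  set F := fderiv ℝ (fderiv ℝ h) x
  have hrow : hess h x *ᵥ c = fun i => F (Pi.single i 1) c := by
    ext i
    simp only [mulVec, dotProduct, hess_apply hd]
    exact ((F (Pi.single i 1)).toLinearMap.apply_eq_dotProduct_single c).symm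
  rw [hrow, dotProduct_comm]
  exact ((F.flip c).toLinearMap.apply_eq_dotProduct_single c).symm

theorem hasDerivAt_fderiv_add_smul_apply {n : ℕ} {h : (Fin n → ℝ) → ℝ} {x₀ : Fin n → ℝ}
    (hd : DifferentiableAt ℝ (fderiv ℝ h) x₀) (c : Fin n → ℝ) :
    HasDerivAt (fun s : ℝ => fderiv ℝ h (x₀ + s • c) c) (c ⬝ᵥ (hess h x₀ *ᵥ c)) 0 := by
  have hline : HasDerivAt (fun s : ℝ => x₀ + s • c) c 0 := by
    simpa using ((hasDerivAt_id (0 : ℝ)).smul_const c).const_add x₀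
  have hd' : HasFDerivAt (fderiv ℝ h) (fderiv ℝ (fderiv ℝ h) x₀) (x₀ + (0 : ℝ) • c) := by
    simpa using hd.hasFDerivAt
  rw [dotProduct_hess_mulVec hd]
  exact (ContinuousLinearMap.apply ℝ ℝ c).hasFDerivAt.comp_hasDerivAt 0
    (hd'.comp_hasDerivAt 0 hline)

theorem simplexInt_nonempty {m : ℕ} (hm : 0 < m) : (simplexInt m).Nonempty :=
  ⟨fun _ => (m : ℝ)⁻¹, fun _ => by positivity, by simp [Finset.card_univ]; field_simp⟩

theorem simplexInt_subset_simplex (m : ℕ) : simplexInt m ⊆ simplex m :=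
  fun _ hx => ⟨fun i => (hx.1 i).le, hx.2⟩

theorem smul_add_smul_mem_simplexInt {m : ℕ} {p v : Fin m → ℝ} (hp : p ∈ simplexInt m)
    (hv : v ∈ simplex m) {a b : ℝ} (ha : 0 < a) (hb : 0 ≤ b) (hab : a + b = 1) :
    a • p + b • v ∈ simplexInt m := by
  refine ⟨fun i => ?_, ?_⟩
  · have := mul_pos ha (hp.1 i)
    have := mul_nonneg hb (hv.1 i)
    simp only [Pi.add_apply, Pi.smul_apply, smul_eq_mul]
    linarith
  · simp [Finset.sum_add_distrib, ← Finset.mul_sum, hp.2, hv.2, hab]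

theorem eventually_add_smul_mem_simplexInt {n : ℕ} {x₀ c : Fin n → ℝ} (hx₀ : x₀ ∈ simplexInt n)
    (hc : ∑ i, c i = 0) : ∀ᶠ s in 𝓝 (0 : ℝ), x₀ + s • c ∈ simplexInt n := by
  have hpos : ∀ i, ∀ᶠ s in 𝓝 (0 : ℝ), 0 < x₀ i + s * c i := fun i =>
    ((by fun_prop : Continuous fun s : ℝ => x₀ i + s * c i).tendsto' 0 _ (by simp)).eventually
      (lt_mem_nhds (hx₀.1 i))
  filter_upwards [Filter.eventually_all.mpr hpos] with s hs
  exact ⟨hs, by simp [Finset.sum_add_distrib, ← Finset.mul_sum, hc, hx₀.2]⟩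

theorem exists_mem_simplexInt_mulVec_mem_of_zero_mem_interior {n m : ℕ}
    {A : Matrix (Fin n) (Fin m) ℝ} {S : Submodule ℝ (Fin n → ℝ)} {p : Fin m → ℝ}
    (hp : p ∈ simplexInt m)
    (h0 : (0 : Fin n → ℝ) ∈ interior (A.mulVecLin '' simplex m + (S : Set (Fin n → ℝ)))) :
    ∃ u ∈ simplexInt m, A *ᵥ u ∈ S := by
  have hsmall : ∀ᶠ t in 𝓝[>] (0 : ℝ),
      -(t • (A *ᵥ p)) ∈ A.mulVecLin '' simplex m + (S : Set (Fin n → ℝ)) :=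
    ((by fun_prop : Continuous fun t : ℝ => -(t • (A *ᵥ p))).tendsto' 0 0 (by simp)).eventually
      (mem_interior_iff_mem_nhds.mp h0) |>.filter_mono nhdsWithin_le_nhds
  obtain ⟨t, ⟨_, ⟨v, hv, rfl⟩, s, hs, hsum⟩, ht : 0 < t⟩ :=
    (hsmall.and self_mem_nhdsWithin).exists
  -- From `A v + s = -t • A p`, the mixture of `p` and `v` with weights `t : 1` is sent into `S`.
  refine ⟨(t / (1 + t)) • p + (1 / (1 + t)) • v,
    smul_add_smul_mem_simplexInt hp hv (by positivity) (by positivity) (by field_simp; ring), ?_⟩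
  have hAv : A *ᵥ v = -(t • (A *ᵥ p)) - s := eq_sub_of_add_eq hsum
  have : A *ᵥ ((t / (1 + t)) • p + (1 / (1 + t)) • v) = -(1 / (1 + t)) • s := by
    rw [mulVec_add, mulVec_smul, mulVec_smul, hAv]
    module
  rw [this]
  exact S.smul_mem _ hs

theorem exists_dotProduct_mulVec_nonpos {n m : ℕ} (hm : 0 < m) (A : Matrix (Fin n) (Fin m) ℝ)
    (hno : ¬ ∃ u₀ ∈ simplexInt m, A *ᵥ u₀ ∈ Submodule.span ℝ {ones n}) :
    ∃ c : Fin n → ℝ, c ≠ 0 ∧ ∑ i, c i = 0 ∧ ∀ u ∈ simplex m, c ⬝ᵥ (A *ᵥ u) ≤ 0 := by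
  obtain ⟨p, hp⟩ := simplexInt_nonempty hm
  have hp' := simplexInt_subset_simplex m hp
  set C := A.mulVecLin '' simplex m + (Submodule.span ℝ {ones n} : Set (Fin n → ℝ))
  have hmemC : ∀ u ∈ simplex m, ∀ t : ℝ, A *ᵥ u + t • ones n ∈ C := fun u hu t =>
    Set.add_mem_add ⟨u, hu, rfl⟩ (Submodule.smul_mem _ t (Submodule.mem_span_singleton_self _))
  have hC : Convex ℝ C :=
    ((convex_stdSimplex ℝ (Fin m)).linear_image A.mulVecLin).add (Submodule.span ℝ _).convex
  obtain ⟨f, hf0, hfC⟩ := hC.exists_ne_zero_forall_le_of_notMem_interior ⟨_, hmemC p hp' 0⟩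
    fun h0 => hno (exists_mem_simplexInt_mulVec_mem_of_zero_mem_interior hp h0)
  have hfc : ∀ y, f y = (fun i => f (Pi.single i 1)) ⬝ᵥ y := fun y =>
    f.toLinearMap.apply_eq_dotProduct_single y
  -- `f` is bounded above on the line `A p + ℝ 𝟙 ⊆ C`, so it vanishes on `𝟙`.
  have hf1 : f (ones n) = 0 := by
    by_contra hne
    have := hfC _ (hmemC p hp' ((1 - f (A *ᵥ p)) / f (ones n)))
    rw [map_add, map_smul, map_zero, smul_eq_mul, div_mul_cancel₀ _ hne] at this
    linarith
  refine ⟨fun i => f (Pi.single i 1), fun hc => hf0 (ContinuousLinearMap.ext fun y => ?_), ?_,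
    fun u hu => ?_⟩
  · rw [hfc, hc, zero_dotProduct]; rfl
  · rw [hfc] at hf1
    simpa [ones, dotProduct] using hf1
  · have := hfC _ (hmemC u hu 0)
    rwa [zero_smul, add_zero, map_zero, hfc] at this

theorem exists_mem_simplexInt_dotProduct_grad_lt {n : ℕ} {h : (Fin n → ℝ) → ℝ}
    {x₀ c : Fin n → ℝ} (hd : DifferentiableAt ℝ (fderiv ℝ h) x₀) (hx₀ : x₀ ∈ simplexInt n)
    (hc : ∑ i, c i = 0) (hpos : 0 < c ⬝ᵥ (hess h x₀ *ᵥ c)) :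
    ∃ x₁ ∈ simplexInt n, c ⬝ᵥ grad h x₀ < c ⬝ᵥ grad h x₁ := by
  have hgrow := (hasDerivAt_fderiv_add_smul_apply hd c).eventually_nhdsGT_lt hpos
  obtain ⟨s, hs, hin⟩ := (hgrow.and ((eventually_add_smul_mem_simplexInt hx₀ hc).filter_mono
    nhdsWithin_le_nhds)).exists
  exact ⟨_, hin, by simpa [dotProduct_grad] using hs⟩

theorem stmt9_general {n m : ℕ} (h : (Fin n → ℝ) → ℝ)
    (U : Set (Fin n → ℝ)) (hU : IsOpen U) (hUsub : simplexInt n ⊆ U)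
    (hC2 : ContDiffOn ℝ 2 h U)
    (hpos : ∀ x ∈ simplexInt n, ∀ v : Fin n → ℝ, v ≠ 0 → 0 < v ⬝ᵥ (hess h x *ᵥ v))
    (A : Matrix (Fin n) (Fin m) ℝ)
    (hno : ¬ ∃ u₀ ∈ simplexInt m, A *ᵥ u₀ ∈ Submodule.span ℝ {ones n}) :
    ∀ z₀ ∈ (fun x => PH n *ᵥ grad h x) '' simplexInt n,
      ∃ z₁ ∈ (fun x => PH n *ᵥ grad h x) '' simplexInt n,
        ∀ T : ℝ, 0 ≤ T → ∀ u : ℝ → Fin m → ℝ,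
          IntervalIntegrable u volume 0 T →
          (∀ s ∈ Set.Icc (0 : ℝ) T, u s ∈ simplex m) →
          z₀ + (∫ s in (0:ℝ)..T, PH n *ᵥ (A *ᵥ u s)) ≠ z₁ := by
  rintro z₀ ⟨x₀, hx₀, rfl⟩
  rcases Nat.eq_zero_or_pos m with rfl | hm
  · exact ⟨_, ⟨x₀, hx₀, rfl⟩, fun T hT u _ hu => absurd (hu 0 ⟨le_rfl, hT⟩).2 (by simp)⟩
  obtain ⟨c, hc0, hc, hcA⟩ := exists_dotProduct_mulVec_nonpos hm A hno
  have hd : DifferentiableAt ℝ (fderiv ℝ h) x₀ :=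
    ((hC2.fderiv_of_isOpen hU (by norm_num)).differentiableOn one_ne_zero x₀
      (hUsub hx₀)).differentiableAt (hU.mem_nhds (hUsub hx₀))
  obtain ⟨x₁, hx₁, hlt⟩ :=
    exists_mem_simplexInt_dotProduct_grad_lt hd hx₀ hc (hpos x₀ hx₀ c hc0)
  refine ⟨_, ⟨x₁, hx₁, rfl⟩, fun T hT u _ hu heq => ?_⟩
  have hdrift : c ⬝ᵥ ∫ s in 0..T, PH n *ᵥ (A *ᵥ u s) ≤ 0 :=
    (LinearMap.toContinuousLinearMap (dotProductEquiv ℝ (Fin n) c)).intervalIntegral_nonpos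
      hT fun s hs => (dotProduct_PH_mulVec hc _).trans_le (hcA _ (hu s hs))
  have hend := congrArg (c ⬝ᵥ ·) heq
  simp only [dotProduct_add, dotProduct_PH_mulVec hc] at hend
  linarith

/-- (Necessity of condition 1) in Theorem 1 of the paper.) If there is no
fully mixed neutralizing strategy `u₀ ∈ Δ_m°` with `A u₀ ∈ span{𝟙}`, then from every
`z₀ ∈ M` some `z₁ ∈ M` is unreachable by the projected dual dynamics `ż = P_H A u`. -/
theorem stmt9 {n m : ℕ} (hn : 2 ≤ n) (h : (Fin n → ℝ) → ℝ)
    (U : Set (Fin n → ℝ)) (hU : IsOpen U) (hUsub : simplexInt n ⊆ U)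
    (hC2 : ContDiffOn ℝ 2 h U)
    (hpos : ∀ x ∈ simplexInt n, ∀ v : Fin n → ℝ, v ≠ 0 → 0 < v ⬝ᵥ (hess h x *ᵥ v))
    (A : Matrix (Fin n) (Fin m) ℝ)
    (hno : ¬ ∃ u₀ ∈ simplexInt m, A *ᵥ u₀ ∈ Submodule.span ℝ {ones n}) :
    ∀ z₀ ∈ (fun x => PH n *ᵥ grad h x) '' simplexInt n,
      ∃ z₁ ∈ (fun x => PH n *ᵥ grad h x) '' simplexInt n,
        ∀ T : ℝ, 0 ≤ T → ∀ u : ℝ → Fin m → ℝ,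
          IntervalIntegrable u volume 0 T →
          (∀ s ∈ Set.Icc (0 : ℝ) T, u s ∈ simplex m) →
          z₀ + (∫ s in (0:ℝ)..T, PH n *ᵥ (A *ᵥ u s)) ≠ z₁ :=
  stmt9_general h U hU hUsub hC2 hpos A hno
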